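/- arXiv:1210.5565 — 2 statements merged into one kernel-verified Lean document; each statement's English description precedes it below -/
import Mathlib

section
/- Let I be an interval of the real line and let ν_0, ν_1, …, ν_n be finite nonatomic Borel measures on I that are pairwise mutually singular. Then for every δ > 0 there exists a decomposition of I into pairwise disjoint subsets P_0, P_1, …, P_n with P_0 ∪ ⋯ ∪ P_n = I, such that each P_j is a finite union of intervals (not necessarily open or closed) and ν_j(I) − ν_j(P_j) < δ for every j ∈ {0,…,n}. -/
/-!
Mutual singularity yields pairwise disjoint measurable sets carrying the measures, and inner
regularity shrinks them to pairwise disjoint compact sets `K j` of almost full measure. Disjoint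
compact sets have disjoint `ε`-thickenings, so covering each `K j` by finitely many `ε`-balls
gives pairwise disjoint finite unions of intervals `V j ⊇ K j`. Adding the points outside all
`V j` to one of them and intersecting with `I` gives the partition; it still consists of finite
unions of intervals because in `ℝ` the complement of an interval is a union of two intervals.
-/

open MeasureTheory Set Function Filter Topology Metric
open scoped ENNReal

def IsFiniteUnionOfIntervals (S : Set ℝ) : Prop :=
  ∃ 𝒥 : Finset (Set ℝ), (∀ J ∈ 𝒥, Convex ℝ J) ∧ S = ⋃₀ ↑𝒥

namespace IsFiniteUnionOfIntervals

theorem of_convex {S : Set ℝ} (h : Convex ℝ S) : IsFiniteUnionOfIntervals S :=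
  ⟨{S}, by simpa using h, by simp⟩

theorem iUnion {ι : Type*} [Finite ι] {S : ι → Set ℝ}
    (h : ∀ i, IsFiniteUnionOfIntervals (S i)) : IsFiniteUnionOfIntervals (⋃ i, S i) := by
  classical
  have := Fintype.ofFinite ι
  choose 𝒥 h𝒥 hS using h
  refine ⟨Finset.univ.biUnion 𝒥, ?_, by simp [hS, sUnion_iUnion]⟩
  simp only [Finset.mem_biUnion, Finset.mem_univ, true_and, forall_exists_index]
  exact fun J i => h𝒥 i J

theorem union {S T : Set ℝ} (hS : IsFiniteUnionOfIntervals S) (hT : IsFiniteUnionOfIntervals T) :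
    IsFiniteUnionOfIntervals (S ∪ T) := by
  rw [union_eq_iUnion]
  exact iUnion fun b => by cases b <;> assumption

theorem inter {S T : Set ℝ} (hS : IsFiniteUnionOfIntervals S) (hT : IsFiniteUnionOfIntervals T) :
    IsFiniteUnionOfIntervals (S ∩ T) := by
  obtain ⟨𝒥, h𝒥, rfl⟩ := hS
  obtain ⟨𝒦, h𝒦, rfl⟩ := hT
  rw [sUnion_eq_iUnion, sUnion_eq_iUnion, iUnion_inter_iUnion]
  exact iUnion fun J => iUnion fun K => of_convex ((h𝒥 J J.2).inter (h𝒦 K K.2))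

theorem compl_of_convex {S : Set ℝ} (h : Convex ℝ S) : IsFiniteUnionOfIntervals Sᶜ := by
  have hsplit : Sᶜ = (⋂ y ∈ S, Iio y) ∪ ⋂ y ∈ S, Ioi y := by
    ext x
    simp only [mem_compl_iff, mem_union, mem_iInter₂, mem_Iio, mem_Ioi]
    constructor
    · intro hx
      by_contra! ⟨⟨a, haS, hax⟩, ⟨b, hbS, hxb⟩⟩
      exact hx (h.ordConnected.out haS hbS ⟨hax, hxb⟩)
    · rintro (hx | hx) hxS
      exacts [(hx x hxS).false, (hx x hxS).false]
  rw [hsplit]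
  exact (of_convex (convex_iInter₂ fun y _ => convex_Iio y)).union
    (of_convex (convex_iInter₂ fun y _ => convex_Ioi y))

theorem compl {S : Set ℝ} (hS : IsFiniteUnionOfIntervals S) : IsFiniteUnionOfIntervals Sᶜ := by
  classical
  obtain ⟨𝒥, h𝒥, rfl⟩ := hS
  induction 𝒥 using Finset.induction with
  | empty => simpa using of_convex convex_univ
  | insert J 𝒥 _ ih =>
    simp only [Finset.mem_insert, forall_eq_or_imp] at h𝒥
    rw [Finset.coe_insert, sUnion_insert, compl_union]
    exact (compl_of_convex h𝒥.1).inter (ih h𝒥.2)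

end IsFiniteUnionOfIntervals

theorem exists_measurableSet_pairwise_disjoint_of_mutuallySingular {α ι : Type*}
    [MeasurableSpace α] [Countable ι] {μ : ι → Measure α}
    (h : Pairwise fun i j => μ i ⟂ₘ μ j) :
    ∃ A : ι → Set α, (∀ i, MeasurableSet (A i)) ∧ Pairwise (Disjoint on A) ∧
      ∀ i, μ i (A i)ᶜ = 0 := by
  set B : ι → Set α := fun i => ⋂ (j) (hij : i ≠ j), (h hij).nullSetᶜ
  have hB : ∀ i, MeasurableSet (B i) := fun i =>
    .iInter fun j => .iInter fun hij => (h hij).measurableSet_nullSet.compl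
  have hBi : ∀ i, μ i (B i)ᶜ = 0 := fun i => by
    simp only [B, compl_iInter, compl_compl]
    exact measure_iUnion_null fun j => measure_iUnion_null fun hij => (h hij).measure_nullSet
  have hBj : ∀ i j, i ≠ j → μ j (B i) = 0 := fun i j hij =>
    measure_mono_null (iInter₂_subset j hij) (h hij).measure_compl_nullSet
  refine ⟨fun i => B i \ ⋃ (j) (_ : j ≠ i), B j, fun i => (hB i).diff
    (.iUnion fun j => .iUnion fun _ => hB j), ?_, fun i => ?_⟩
  · intro i j hij
    exact disjoint_left.2 fun x hxi hxj => hxj.2 (mem_biUnion hij hxi.1)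
  · rw [compl_sdiff]
    exact measure_union_null
      (measure_iUnion_null fun j => measure_iUnion_null fun hji => hBj j i hji) (hBi i)

theorem exists_isCompact_pairwise_disjoint_measure_compl_lt {α ι : Type*} [TopologicalSpace α]
    [MeasurableSpace α] [OpensMeasurableSpace α] [T2Space α] [Countable ι]
    {μ : ι → Measure α} [∀ i, IsFiniteMeasure (μ i)]
    [∀ i, (μ i).InnerRegularCompactLTTop]
    (h : Pairwise fun i j => μ i ⟂ₘ μ j) {ε : ℝ≥0∞} (hε : ε ≠ 0) :
    ∃ K : ι → Set α, (∀ i, IsCompact (K i)) ∧ Pairwise (Disjoint on K) ∧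
      ∀ i, μ i (K i)ᶜ < ε := by
  obtain ⟨A, hA, hAd, hAμ⟩ := exists_measurableSet_pairwise_disjoint_of_mutuallySingular h
  choose K hKA hK hKμ using fun i =>
    (hA i).exists_isCompact_sdiff_lt (measure_ne_top (μ i) _) hε
  refine ⟨K, hK, fun i j hij => (hAd hij).mono (hKA i) (hKA j), fun i => ?_⟩
  rw [← measure_inter_conull (hAμ i), inter_comm, ← sdiff_eq]
  exact hKμ i

theorem exists_pos_pairwise_disjoint_thickening {α ι : Type*} [EMetricSpace α] [Finite ι]
    {K : ι → Set α} (hK : ∀ i, IsCompact (K i)) (hd : Pairwise (Disjoint on K)) :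
    ∃ ε : ℝ, 0 < ε ∧ Pairwise (Disjoint on fun i => thickening ε (K i)) := by
  have hev : ∀ i j, i ≠ j → ∀ᶠ ε in 𝓝[>] (0 : ℝ),
      Disjoint (thickening ε (K i)) (thickening ε (K j)) := fun i j hij => by
    obtain ⟨δ, hδ, hdisj⟩ := (hd hij).exists_thickenings (hK i) (hK j).isClosed
    filter_upwards [Ioc_mem_nhdsGT hδ] with ε hε
    exact hdisj.mono (thickening_mono hε.2 _) (thickening_mono hε.2 _)
  have hall : ∀ᶠ ε in 𝓝[>] (0 : ℝ), ∀ i j, i ≠ j →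
      Disjoint (thickening ε (K i)) (thickening ε (K j)) :=
    eventually_all.2 fun i => eventually_all.2 fun j => eventually_imp_distrib_left.2 (hev i j)
  exact (hall.and self_mem_nhdsWithin).exists.imp fun ε hε => ⟨hε.2, hε.1⟩

theorem IsCompact.exists_isFiniteUnionOfIntervals_subset_thickening {K : Set ℝ}
    (hK : IsCompact K) {ε : ℝ} (hε : 0 < ε) :
    ∃ V : Set ℝ, IsFiniteUnionOfIntervals V ∧ K ⊆ V ∧ V ⊆ thickening ε K := by
  obtain ⟨t, htK, htf, hKt⟩ := hK.finite_cover_balls hε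
  refine ⟨⋃ x ∈ t, ball x ε, ?_, hKt,
    iUnion₂_subset fun x hx => ball_subset_thickening (htK hx) ε⟩
  have := htf.to_subtype
  rw [biUnion_eq_iUnion]
  exact .iUnion fun x => .of_convex (convex_ball _ _)

theorem exists_isFiniteUnionOfIntervals_partition_superset {ι : Type*} [Finite ι] [Nonempty ι]
    {V : ι → Set ℝ} (hV : ∀ i, IsFiniteUnionOfIntervals (V i))
    (hd : Pairwise (Disjoint on V)) :
    ∃ W : ι → Set ℝ, (∀ i, IsFiniteUnionOfIntervals (W i)) ∧ Pairwise (Disjoint on W) ∧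
      ⋃ i, W i = univ ∧ ∀ i, V i ⊆ W i := by
  classical
  obtain ⟨i₀⟩ := ‹Nonempty ι›
  set W := update V i₀ (V i₀ ∪ (⋃ i, V i)ᶜ)
  have hVW : ∀ i, V i ⊆ W i := fun i => by
    rcases eq_or_ne i i₀ with rfl | hi
    · simp [W]
    · simp [W, hi]
  refine ⟨W, fun i => ?_, fun i j hij => ?_, ?_, hVW⟩
  · rcases eq_or_ne i i₀ with rfl | hi
    · simpa [W] using (hV i).union (IsFiniteUnionOfIntervals.iUnion hV).compl
    · simpa [W, hi] using hV i
  · have hW₀ : ∀ j, j ≠ i₀ → Disjoint (W i₀) (W j) := fun j hj => by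
      simp only [W, update_self, update_of_ne hj]
      exact disjoint_union_left.2
        ⟨hd hj.symm, disjoint_compl_left_iff_subset.2 (subset_iUnion V j)⟩
    rcases eq_or_ne i i₀ with rfl | hi
    · exact hW₀ j hij.symm
    rcases eq_or_ne j i₀ with rfl | hj
    · exact (hW₀ i hi).symm
    simpa only [onFun, W, update_of_ne hi, update_of_ne hj] using hd hij
  · refine eq_univ_of_forall fun x => ?_
    by_cases hx : x ∈ ⋃ i, V i
    · obtain ⟨i, hi⟩ := mem_iUnion.1 hx
      exact mem_iUnion.2 ⟨i, hVW i hi⟩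
    · exact mem_iUnion.2 ⟨i₀, by simp only [W, update_self]; exact Or.inr hx⟩

theorem exists_isFiniteUnionOfIntervals_partition_of_isCompact {ι : Type*} [Finite ι]
    [Nonempty ι] {K : ι → Set ℝ} (hK : ∀ i, IsCompact (K i))
    (hd : Pairwise (Disjoint on K)) :
    ∃ W : ι → Set ℝ, (∀ i, IsFiniteUnionOfIntervals (W i)) ∧ Pairwise (Disjoint on W) ∧
      ⋃ i, W i = univ ∧ ∀ i, K i ⊆ W i := by
  obtain ⟨ε, hε, hεd⟩ := exists_pos_pairwise_disjoint_thickening hK hd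
  choose V hV hKV hVε using fun i => (hK i).exists_isFiniteUnionOfIntervals_subset_thickening hε
  obtain ⟨W, hW, hWd, hWU, hVW⟩ := exists_isFiniteUnionOfIntervals_partition_superset hV
    fun i j hij => (hεd hij).mono (hVε i) (hVε j)
  exact ⟨W, hW, hWd, hWU, fun i => (hKV i).trans (hVW i)⟩

theorem stmt_2_general (I : Set ℝ) (hI : Convex ℝ I) (n : ℕ)
    (ν : Fin (n + 1) → Measure ℝ)
    (hfin : ∀ j, IsFiniteMeasure (ν j))
    (hsing : Pairwise fun j k => (ν j).MutuallySingular (ν k))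
    (δ : ℝ) (hδ : 0 < δ) :
    ∃ P : Fin (n + 1) → Set ℝ,
      (Pairwise fun j k => Disjoint (P j) (P k)) ∧
      (⋃ j, P j) = I ∧
      (∀ j, ∃ 𝒥 : Finset (Set ℝ), (∀ J ∈ 𝒥, Convex ℝ J) ∧ P j = ⋃₀ ↑𝒥) ∧
      (∀ j, (ν j I).toReal - (ν j (P j)).toReal < δ) := by
  obtain ⟨K, hK, hKd, hKν⟩ :=
    exists_isCompact_pairwise_disjoint_measure_compl_lt hsing (ENNReal.ofReal_pos.2 hδ).ne'
  obtain ⟨W, hW, hWd, hWU, hKW⟩ := exists_isFiniteUnionOfIntervals_partition_of_isCompact hK hKd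
  refine ⟨fun j => I ∩ W j, fun j k hjk => (hWd hjk).mono inter_subset_right inter_subset_right,
    by rw [← inter_iUnion, hWU, inter_univ],
    fun j => (IsFiniteUnionOfIntervals.of_convex hI).inter (hW j), fun j => ?_⟩
  calc (ν j I).toReal - (ν j (I ∩ W j)).toReal ≤ (ν j).real (I \ (I ∩ W j)) :=
        le_measureReal_sdiff
    _ ≤ (ν j).real (K j)ᶜ := measureReal_mono fun x hx hxK => hx.2 ⟨hx.1, hKW j hxK⟩
    _ < δ := ENNReal.toReal_lt_of_lt_ofReal (hKν j)

/-- Lemma 4.12 of the paper: finitely many mutually-singular nonatomic finite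
Borel measures on an interval `I ⊆ ℝ` can be almost separated by a
decomposition of `I` into finitely many pieces, each a finite union of
intervals. -/
theorem stmt_2 (I : Set ℝ) (hI : Convex ℝ I) (n : ℕ)
    (ν : Fin (n + 1) → Measure ℝ)
    (hfin : ∀ j, IsFiniteMeasure (ν j))
    (hsupp : ∀ j, ν j Iᶜ = 0)
    (hna : ∀ j (x : ℝ), ν j {x} = 0)
    (hsing : Pairwise fun j k => (ν j).MutuallySingular (ν k))
    (δ : ℝ) (hδ : 0 < δ) :
    ∃ P : Fin (n + 1) → Set ℝ,
      (Pairwise fun j k => Disjoint (P j) (P k)) ∧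
      (⋃ j, P j) = I ∧
      (∀ j, ∃ 𝒥 : Finset (Set ℝ), (∀ J ∈ 𝒥, Convex ℝ J) ∧ P j = ⋃₀ ↑𝒥) ∧
      (∀ j, (ν j I).toReal - (ν j (P j)).toReal < δ) :=
  stmt_2_general I hI n ν hfin hsing δ hδ
end

section
/- Let (X,d) be a metric space and let f : X → ℝ be 1-Lipschitz. Let T₁ and T₂ be two intervals of ℝ with nonempty intersection, and let γ₁ : T₁ → X and γ₂ : T₂ → X be optimal paths for f that agree on T₁ ∩ T₂. Then the path γ : T₁ ∪ T₂ → X defined by γ(t) := γ₁(t) if t ∈ T₁ and γ(t) := γ₂(t) if t ∈ T₂ is an optimal path for f; in particular, γ is a geodesic, i.e., d(γ(t₁),γ(t₂)) = |t₂ − t₁| for all t₁, t₂ ∈ T₁ ∪ T₂. -/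
/-!
Two pieces of an optimal path meet at a point `r` of `T₁ ∩ T₂`, and since both domains are
intervals, any `s < t` lying in different pieces can be joined through such an `r ∈ [s, t]`.
Along `s → r → t` the function `f` drops by exactly `t - s`, so the `1`-Lipschitz bound
forces `d(γ s, γ t) ≥ t - s`, while the triangle inequality gives `≤`.
-/

open Classical

open Set

theorem exists_mem_inter_mem_Icc {S T : Set ℝ} (hS : S.OrdConnected) (hT : T.OrdConnected)
    (hne : (S ∩ T).Nonempty) {s t : ℝ} (hs : s ∈ S) (ht : t ∈ T) (hst : s ≤ t) :
    ∃ r ∈ S ∩ T, r ∈ Icc s t := by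
  obtain ⟨r, hrS, hrT⟩ := hne
  rcases lt_or_ge r s with hrs | hsr
  · exact ⟨s, ⟨hs, hT.out hrT ht ⟨hrs.le, hst⟩⟩, le_rfl, hst⟩
  rcases le_or_gt r t with hrt | htr
  · exact ⟨r, ⟨hrS, hrT⟩, hsr, hrt⟩
  · exact ⟨t, ⟨hS.out hs hrS ⟨hst, htr.le⟩, ht⟩, hst, le_rfl⟩

section

variable {X : Type*} [PseudoMetricSpace X]

def IsOptimalPath (f : X → ℝ) (γ : ℝ → X) (T : Set ℝ) : Prop :=
  (∀ s ∈ T, ∀ t ∈ T, dist (γ s) (γ t) = |s - t|) ∧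
    ∀ s ∈ T, ∀ t ∈ T, s < t → f (γ s) = dist (γ s) (γ t) + f (γ t)

variable {f : X → ℝ} {γ γ' : ℝ → X} {S T : Set ℝ}

theorem isOptimalPath_iff :
    IsOptimalPath f γ T ↔
      ∀ s ∈ T, ∀ t ∈ T, s ≤ t → dist (γ s) (γ t) = t - s ∧ f (γ s) = t - s + f (γ t) := by
  constructor
  · rintro ⟨hgeo, hopt⟩ s hs t ht hst
    have hdist : dist (γ s) (γ t) = t - s := by
      rw [hgeo s hs t ht, abs_sub_comm, abs_of_nonneg (sub_nonneg.mpr hst)]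
    refine ⟨hdist, ?_⟩
    rcases hst.lt_or_eq with hlt | rfl
    · rw [← hdist, hopt s hs t ht hlt]
    · simp
  · intro h
    refine ⟨fun s hs t ht => ?_, fun s hs t ht hst => ?_⟩
    · rcases le_total s t with hst | hts
      · rw [(h s hs t ht hst).1, abs_sub_comm, abs_of_nonneg (sub_nonneg.mpr hst)]
      · rw [dist_comm, (h t ht s hs hts).1, abs_of_nonneg (sub_nonneg.mpr hts)]
    · rw [(h s hs t ht hst.le).1]
      exact (h s hs t ht hst.le).2

theorem IsOptimalPath.congr (h : IsOptimalPath f γ T) (heq : EqOn γ γ' T) :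
    IsOptimalPath f γ' T := by
  rw [isOptimalPath_iff] at h ⊢
  intro s hs t ht hst
  rw [← heq hs, ← heq ht]
  exact h s hs t ht hst

theorem dist_eq_add_of_lipschitz_of_apply_eq (hf : ∀ x y : X, f x - f y ≤ dist x y)
    {x y z : X} {a b : ℝ} (hxy : dist x y = a) (hyz : dist y z = b)
    (hfxy : f x = a + f y) (hfyz : f y = b + f z) :
    dist x z = a + b := by
  refine le_antisymm ?_ ?_
  · exact hxy ▸ hyz ▸ dist_triangle x y z
  · linarith [hf x z]

theorem IsOptimalPath.union (hf : ∀ x y : X, f x - f y ≤ dist x y)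
    (h₁ : IsOptimalPath f γ S) (h₂ : IsOptimalPath f γ T)
    (hS : S.OrdConnected) (hT : T.OrdConnected) (hne : (S ∩ T).Nonempty) :
    IsOptimalPath f γ (S ∪ T) := by
  have splice : ∀ {A B : Set ℝ}, IsOptimalPath f γ A → IsOptimalPath f γ B →
      A.OrdConnected → B.OrdConnected → (A ∩ B).Nonempty →
      ∀ s ∈ A, ∀ t ∈ B, s ≤ t → dist (γ s) (γ t) = t - s ∧ f (γ s) = t - s + f (γ t) := by
    intro A B hA hB hA' hB' hAB s hs t ht hst
    obtain ⟨r, ⟨hrA, hrB⟩, hsr, hrt⟩ := exists_mem_inter_mem_Icc hA' hB' hAB hs ht hst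
    obtain ⟨hdsr, hfsr⟩ := isOptimalPath_iff.mp hA s hs r hrA hsr
    obtain ⟨hdrt, hfrt⟩ := isOptimalPath_iff.mp hB r hrB t ht hrt
    refine ⟨?_, by linarith⟩
    rw [dist_eq_add_of_lipschitz_of_apply_eq hf hdsr hdrt hfsr hfrt]
    ring
  rw [isOptimalPath_iff]
  rintro s (hs | hs) t (ht | ht) hst
  · exact splice h₁ h₁ hS hS ⟨s, hs, hs⟩ s hs t ht hst
  · exact splice h₁ h₂ hS hT hne s hs t ht hst
  · exact splice h₂ h₁ hT hS (inter_comm S T ▸ hne) s hs t ht hst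
  · exact splice h₂ h₂ hT hT ⟨s, hs, hs⟩ s hs t ht hst

end

/-- Lemma 7.5 of the paper: two optimal paths for a `1`-Lipschitz function
which agree on the (nonempty) intersection of their interval domains splice
together to an optimal path; in particular the spliced path is geodesic. -/
theorem stmt_5 {X : Type*} [MetricSpace X] (f : X → ℝ)
    (hf : ∀ x y : X, f x - f y ≤ dist x y)
    (T₁ T₂ : Set ℝ) (hT₁ : Convex ℝ T₁) (hT₂ : Convex ℝ T₂)
    (hne : (T₁ ∩ T₂).Nonempty)
    (γ₁ γ₂ : ℝ → X)
    (hgeo₁ : ∀ s ∈ T₁, ∀ t ∈ T₁, dist (γ₁ s) (γ₁ t) = |s - t|)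
    (hopt₁ : ∀ s ∈ T₁, ∀ t ∈ T₁, s < t → f (γ₁ s) = dist (γ₁ s) (γ₁ t) + f (γ₁ t))
    (hgeo₂ : ∀ s ∈ T₂, ∀ t ∈ T₂, dist (γ₂ s) (γ₂ t) = |s - t|)
    (hopt₂ : ∀ s ∈ T₂, ∀ t ∈ T₂, s < t → f (γ₂ s) = dist (γ₂ s) (γ₂ t) + f (γ₂ t))
    (hagree : ∀ t ∈ T₁ ∩ T₂, γ₁ t = γ₂ t)
    (γ : ℝ → X) (hγ : ∀ t, γ t = if t ∈ T₁ then γ₁ t else γ₂ t) :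
    (∀ s ∈ T₁ ∪ T₂, ∀ t ∈ T₁ ∪ T₂, dist (γ s) (γ t) = |s - t|) ∧
    (∀ s ∈ T₁ ∪ T₂, ∀ t ∈ T₁ ∪ T₂, s < t →
      f (γ s) = dist (γ s) (γ t) + f (γ t)) := by
  have heq₁ : EqOn γ₁ γ T₁ := fun t ht => by rw [hγ, if_pos ht]
  have heq₂ : EqOn γ₂ γ T₂ := fun t ht => by
    rw [hγ]
    split_ifs with ht₁
    exacts [(hagree t ⟨ht₁, ht⟩).symm, rfl]
  have h₁ : IsOptimalPath f γ T₁ := IsOptimalPath.congr ⟨hgeo₁, hopt₁⟩ heq₁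
  have h₂ : IsOptimalPath f γ T₂ := IsOptimalPath.congr ⟨hgeo₂, hopt₂⟩ heq₂
  exact h₁.union hf h₂ hT₁.ordConnected hT₂.ordConnected hne
end
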